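/- arXiv:2209.01600 — 2 statements merged into one kernel-verified Lean document; each statement's English description precedes it below -/
import Mathlib

section
/- Let 7/3 < p < 5, 1 < q < p, and ω > 0. Then m_ω = m̃_ω, where m_ω = inf{S_ω(φ) : φ ∈ H¹(ℝ³)\{0}, G(φ) = 0} and m̃_ω = inf{I_ω(φ) : φ ∈ H¹(ℝ³)\{0}, G(φ) ≤ 0} with I_ω = S_ω − (2/(3(q−1)))G. -/
open Real Set MeasureTheory

noncomputable section

abbrev E3 := EuclideanSpace ℝ (Fin 3)

/-- `‖∇φ‖²_{L²(ℝ³)}`. -/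
def gradNormSq (φ : E3 → ℂ) : ℝ := ∫ x : E3, ‖fderiv ℝ φ x‖ ^ 2

/-- `‖φ‖^r_{L^r(ℝ³)}`. -/
def lpPow (φ : E3 → ℂ) (r : ℝ) : ℝ := ∫ x : E3, ‖φ x‖ ^ r

/-- Membership in `H¹(ℝ³)` (with pointwise derivative). -/
def InH1 (φ : E3 → ℂ) : Prop :=
  Differentiable ℝ φ ∧ MemLp φ 2 (volume : Measure E3) ∧
    MemLp (fun x => fderiv ℝ φ x) 2 (volume : Measure E3)

/-- The action functional `S_ω`. -/
def Sfun (p q ω : ℝ) (φ : E3 → ℂ) : ℝ :=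
  (1 / 2) * gradNormSq φ - (1 / (p + 1)) * lpPow φ (p + 1)
    + (1 / (q + 1)) * lpPow φ (q + 1) + (ω / 2) * lpPow φ 2

/-- The Pohozaev functional `G`. -/
def Gfun (p q : ℝ) (φ : E3 → ℂ) : ℝ :=
  gradNormSq φ - (3 * (p - 1) / (2 * (p + 1))) * lpPow φ (p + 1)
    + (3 * (q - 1) / (2 * (q + 1))) * lpPow φ (q + 1)

/-- The functional `I_ω = S_ω − (2/(3(q−1)))·G`. -/
def Ifun (p q ω : ℝ) (φ : E3 → ℂ) : ℝ :=
  Sfun p q ω φ - (2 / (3 * (q - 1))) * Gfun p q φ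


/-!
For `G(φ) < 0` the dilations `φ_λ(x) = λ^{3/2} φ(λx)` scale the three terms of `G` by `λ²`,
`λ^{3(p-1)/2}` and `λ^{3(q-1)/2}`. Since `q < p` the defocusing term dominates as `λ → 0`
(it is nonzero: `‖φ‖_{p+1} > 0`, and `L^{q+1}` sits between `L²` and `L^{p+1}`), so
`G(φ_λ) = 0` for some `λ ∈ (0, 1]`. Removing from `S_ω` the multiple `2/(3(p-1)) G` that cancels
the `L^{p+1}` term leaves a functional `J` with nonnegative coefficients when `p ≥ 7/3`, and
these can only decrease under `φ ↦ φ_λ`, `λ ≤ 1`. Hence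
`S_ω(φ_λ) = J(φ_λ) ≤ J(φ) ≤ I_ω(φ)`, the last step because `2/(3(p-1)) ≤ 2/(3(q-1))` and
`G(φ) ≤ 0`. On `G = 0` the functionals `I_ω` and `S_ω` agree, so each set of values is
dominated by the other.
-/
open Filter Topology

theorem Real.rpow_le_rpow_add_rpow {x r s t : ℝ} (hx : 0 ≤ x) (hr : 0 ≤ r) (hrs : r ≤ s)
    (hst : s ≤ t) : x ^ s ≤ x ^ r + x ^ t := by
  rcases le_total x 1 with hx1 | hx1
  · linarith [rpow_le_rpow_of_exponent_ge' hx hx1 hr hrs, rpow_nonneg hx t]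
  · linarith [rpow_le_rpow_of_exponent_le hx1 hst, rpow_nonneg hx r]

theorem MeasureTheory.Integrable.norm_rpow_of_le_of_le {α E : Type*} [MeasurableSpace α]
    {μ : Measure α} [NormedAddCommGroup E] {f : α → E} {r s t : ℝ}
    (hf : AEStronglyMeasurable f μ) (hr : Integrable (fun x => ‖f x‖ ^ r) μ)
    (ht : Integrable (fun x => ‖f x‖ ^ t) μ) (h0r : 0 ≤ r) (hrs : r ≤ s) (hst : s ≤ t) :
    Integrable (fun x => ‖f x‖ ^ s) μ :=
  (hr.add ht).mono' (hf.norm.aemeasurable.pow_const s).aestronglyMeasurable <|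
    Eventually.of_forall fun x => by
      rw [norm_of_nonneg (rpow_nonneg (norm_nonneg _) _)]
      exact rpow_le_rpow_add_rpow (norm_nonneg _) h0r hrs hst

theorem MeasureTheory.MemLp.comp_smul {E F : Type*} [NormedAddCommGroup E] [NormedSpace ℝ E]
    [MeasurableSpace E] [BorelSpace E] [FiniteDimensional ℝ E] {μ : Measure E}
    [μ.IsAddHaarMeasure] [NormedAddCommGroup F] {g : E → F} {p : ENNReal}
    (hg : MemLp g p μ) {r : ℝ} (hr : r ≠ 0) : MemLp (fun x => g (r • x)) p μ := by
  have hmap := hg.smul_measure (c := ENNReal.ofReal |(r ^ Module.finrank ℝ E)⁻¹|)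
    ENNReal.ofReal_ne_top
  rw [← Measure.map_addHaar_smul μ hr] at hmap
  exact hmap.comp_of_map (measurable_const_smul r).aemeasurable

lemma gradNormSq_nonneg (φ : E3 → ℂ) : 0 ≤ gradNormSq φ :=
  integral_nonneg fun _ => by positivity

lemma lpPow_nonneg (φ : E3 → ℂ) (r : ℝ) : 0 ≤ lpPow φ r :=
  integral_nonneg fun _ => rpow_nonneg (norm_nonneg _) _

lemma lpPow_pos_of_le_of_lpPow_pos {φ : E3 → ℂ} (hφ : MemLp φ 2) {r s : ℝ} (h2r : 2 ≤ r)
    (hrs : r ≤ s) (hs : 0 < lpPow φ s) : 0 < lpPow φ r := by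
  have hint : Integrable (fun x => ‖φ x‖ ^ r) := by
    refine Integrable.norm_rpow_of_le_of_le hφ.1 ?_ (.of_integral_ne_zero hs.ne') zero_le_two
      h2r hrs
    simpa using hφ.integrable_norm_rpow two_ne_zero ENNReal.ofNat_ne_top
  refine (lpPow_nonneg φ r).lt_of_ne' fun h0 => hs.ne' ?_
  have hφ0 : ∀ᵐ x, φ x = 0 := by
    filter_upwards [(integral_eq_zero_iff_of_nonneg (fun _ => rpow_nonneg (norm_nonneg _) _)
      hint).1 h0] with x hx
    simpa [rpow_eq_zero (norm_nonneg _) (by linarith : r ≠ 0)] using hx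
  calc lpPow φ s = ∫ _ : E3, (0 : ℝ) := integral_congr_ae <| by
        filter_upwards [hφ0] with x hx
        simp [hx, zero_rpow (by linarith : s ≠ 0)]
    _ = 0 := integral_zero _ _

lemma integral_comp_smul_E3 (f : E3 → ℝ) {l : ℝ} (hl : 0 ≤ l) :
    ∫ x : E3, f (l • x) = (l ^ 3)⁻¹ * ∫ x : E3, f x := by
  simpa [finrank_euclideanSpace_fin] using
    Measure.integral_comp_smul_of_nonneg (volume : Measure E3) f l (hR := hl)

def dilate (l : ℝ) (φ : E3 → ℂ) : E3 → ℂ := fun x => l ^ (3 / 2 : ℝ) • φ (l • x)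

section Dilation

variable {φ : E3 → ℂ} {l : ℝ}

lemma hasFDerivAt_dilate (hφ : Differentiable ℝ φ) (x : E3) :
    HasFDerivAt (dilate l φ) ((l ^ (3 / 2 : ℝ) * l) • fderiv ℝ φ (l • x)) x := by
  have hcomp := (hφ (l • x)).hasFDerivAt.comp x ((hasFDerivAt_id x).const_smul l)
  have hlin : l ^ (3 / 2 : ℝ) • (fderiv ℝ φ (l • x)).comp (l • ContinuousLinearMap.id ℝ E3)
      = (l ^ (3 / 2 : ℝ) * l) • fderiv ℝ φ (l • x) := by
    ext v
    simp [mul_smul]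
  exact hlin ▸ hcomp.const_smul (l ^ (3 / 2 : ℝ))

lemma fderiv_dilate (hφ : Differentiable ℝ φ) (x : E3) :
    fderiv ℝ (dilate l φ) x = (l ^ (3 / 2 : ℝ) * l) • fderiv ℝ φ (l • x) :=
  (hasFDerivAt_dilate hφ x).fderiv

lemma dilate_ne_zero (hφ : φ ≠ 0) (hl : 0 < l) : dilate l φ ≠ 0 := by
  obtain ⟨x, hx⟩ := Function.ne_iff.1 hφ
  refine Function.ne_iff.2 ⟨l⁻¹ • x, ?_⟩
  simpa [dilate, smul_smul, hl.ne', (rpow_pos_of_pos hl _).ne'] using hx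

lemma InH1.dilate (hφ : InH1 φ) (hl : 0 < l) : InH1 (dilate l φ) := by
  obtain ⟨hdiff, hL2, hdL2⟩ := hφ
  refine ⟨fun x => (hasFDerivAt_dilate hdiff x).differentiableAt,
    by exact (hL2.comp_smul hl.ne').const_smul (l ^ (3 / 2 : ℝ)), ?_⟩
  simp_rw [fderiv_dilate hdiff]
  exact (hdL2.comp_smul hl.ne').const_smul (l ^ (3 / 2 : ℝ) * l)

lemma gradNormSq_dilate (hφ : Differentiable ℝ φ) (hl : 0 < l) :
    gradNormSq (dilate l φ) = l ^ 2 * gradNormSq φ := by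
  have hpow : (l ^ (3 / 2 : ℝ)) ^ 2 = l ^ 3 := by
    rw [← rpow_mul_natCast hl.le]; norm_num
  simp only [gradNormSq, fderiv_dilate hφ, norm_smul,
    norm_of_nonneg (by positivity : 0 ≤ l ^ (3 / 2 : ℝ) * l), mul_pow, hpow, integral_const_mul,
    integral_comp_smul_E3 (fun y => ‖fderiv ℝ φ y‖ ^ 2) hl.le]
  field_simp

lemma lpPow_dilate (hl : 0 < l) (r : ℝ) :
    lpPow (dilate l φ) r = l ^ (3 / 2 * r - 3) * lpPow φ r := by
  have hpow : (l ^ (3 / 2 : ℝ)) ^ r * (l ^ 3)⁻¹ = l ^ (3 / 2 * r - 3) := by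
    rw [← rpow_mul hl.le, rpow_sub hl, rpow_ofNat, ← div_eq_mul_inv]
  simp only [lpPow, dilate, norm_smul, norm_of_nonneg (by positivity : 0 ≤ l ^ (3 / 2 : ℝ)),
    mul_rpow (by positivity : 0 ≤ l ^ (3 / 2 : ℝ)) (norm_nonneg _), integral_const_mul,
    integral_comp_smul_E3 (fun y => ‖φ y‖ ^ r) hl.le, ← hpow]
  ring

end Dilation

lemma exists_mem_Ioc_sq_mul_sub_rpow_mul_add_rpow_mul_eq_zero {a b c s t : ℝ} (ha : 0 ≤ a)
    (hc : 0 < c) (hts : t < s) (h1 : a - b + c ≤ 0) :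
    ∃ l ∈ Ioc (0 : ℝ) 1, l ^ 2 * a - l ^ s * b + l ^ t * c = 0 := by
  set f : ℝ → ℝ := fun l => l ^ 2 * a - l ^ s * b + l ^ t * c
  have hsmall : ∀ᶠ l in 𝓝[>] (0 : ℝ), l ^ (s - t) * b < c := by
    have hlim : Tendsto (fun l : ℝ => l ^ (s - t) * b) (𝓝 0) (𝓝 0) := by
      simpa [zero_rpow (sub_pos.2 hts).ne'] using
        (continuousAt_rpow_const 0 (s - t) (Or.inr (sub_pos.2 hts).le)).tendsto.mul_const b
    exact (hlim.eventually (gt_mem_nhds hc)).filter_mono nhdsWithin_le_nhds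
  obtain ⟨ε, hεc, hε⟩ := (hsmall.and (Ioo_mem_nhdsGT one_pos)).exists
  have hfε : 0 < f ε := by
    have hsplit : ε ^ s = ε ^ t * ε ^ (s - t) := by rw [← rpow_add hε.1]; ring_nf
    have hdom : 0 < ε ^ t * (c - ε ^ (s - t) * b) :=
      mul_pos (rpow_pos_of_pos hε.1 t) (sub_pos.2 hεc)
    have : 0 ≤ ε ^ 2 * a := by positivity
    simp only [f, hsplit]
    linarith
  have hcont : ContinuousOn f (Icc ε 1) := by
    fun_prop (disch := exact fun l (hl : l ∈ Icc ε 1) => (hε.1.trans_le hl.1).ne')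
  obtain ⟨l, hl, hfl⟩ := intermediate_value_Icc' hε.2.le hcont
    ⟨by simpa [f] using h1, hfε.le⟩
  exact ⟨l, ⟨hε.1.trans_le hl.1, hl.2⟩, hfl⟩

lemma Gfun_dilate {p q l : ℝ} {φ : E3 → ℂ} (hφ : Differentiable ℝ φ) (hl : 0 < l) :
    Gfun p q (dilate l φ) = l ^ 2 * gradNormSq φ
      - l ^ (3 * (p - 1) / 2) * (3 * (p - 1) / (2 * (p + 1)) * lpPow φ (p + 1))
      + l ^ (3 * (q - 1) / 2) * (3 * (q - 1) / (2 * (q + 1)) * lpPow φ (q + 1)) := by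
  rw [Gfun, gradNormSq_dilate hφ hl, lpPow_dilate hl, lpPow_dilate hl]
  ring_nf

/-- `S_ω - 2/(3(p-1)) G`: the multiple of `G` is the one that cancels the `L^{p+1}` term. -/
def Jfun (p q ω : ℝ) (φ : E3 → ℂ) : ℝ :=
  (3 * p - 7) / (6 * (p - 1)) * gradNormSq φ + (p - q) / ((q + 1) * (p - 1)) * lpPow φ (q + 1)
    + ω / 2 * lpPow φ 2

section Pohozaev

variable {p q ω : ℝ}

lemma Ifun_eq_Sfun_of_Gfun_eq_zero {φ : E3 → ℂ} (hG : Gfun p q φ = 0) :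
    Ifun p q ω φ = Sfun p q ω φ := by
  rw [Ifun, hG, mul_zero, sub_zero]

lemma Sfun_eq_Jfun_add_Gfun (hp : 1 < p) (hq : -1 < q) (φ : E3 → ℂ) :
    Sfun p q ω φ = Jfun p q ω φ + 2 / (3 * (p - 1)) * Gfun p q φ := by
  have : p - 1 ≠ 0 := by linarith
  have : p + 1 ≠ 0 := by linarith
  have : q + 1 ≠ 0 := by linarith
  rw [Sfun, Jfun, Gfun]
  field_simp
  ring

lemma Jfun_le_Ifun (hq : 1 < q) (hqp : q ≤ p) {φ : E3 → ℂ} (hG : Gfun p q φ ≤ 0) :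
    Jfun p q ω φ ≤ Ifun p q ω φ := by
  have hcoef : 2 / (3 * (p - 1)) ≤ 2 / (3 * (q - 1)) :=
    div_le_div_of_nonneg_left zero_le_two (by linarith) (by linarith)
  rw [Ifun, Sfun_eq_Jfun_add_Gfun (by linarith) (by linarith)]
  nlinarith

lemma Jfun_dilate_le (hp : 7 / 3 ≤ p) (hq : 1 ≤ q) (hqp : q ≤ p) {φ : E3 → ℂ}
    (hφ : Differentiable ℝ φ) {l : ℝ} (hl : l ∈ Ioc (0 : ℝ) 1) :
    Jfun p q ω (dilate l φ) ≤ Jfun p q ω φ := by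
  have hα : 0 ≤ (3 * p - 7) / (6 * (p - 1)) := div_nonneg (by linarith) (by linarith)
  have hβ : 0 ≤ (p - q) / ((q + 1) * (p - 1)) :=
    div_nonneg (by linarith) (mul_nonneg (by linarith) (by linarith))
  have hl2 : l ^ 2 ≤ 1 := pow_le_one₀ hl.1.le hl.2
  have hlq : l ^ (3 / 2 * (q + 1) - 3) ≤ 1 := rpow_le_one hl.1.le hl.2 (by linarith)
  rw [Jfun, Jfun, gradNormSq_dilate hφ hl.1, lpPow_dilate hl.1, lpPow_dilate hl.1,
    show (3 / 2 * 2 - 3 : ℝ) = 0 by norm_num, rpow_zero, one_mul]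
  gcongr
  · exact mul_le_of_le_one_left (gradNormSq_nonneg φ) hl2
  · exact mul_le_of_le_one_left (lpPow_nonneg φ _) hlq

end Pohozaev

lemma exists_dilate_Gfun_eq_zero {p q : ℝ} (hq : 1 < q) (hqp : q < p) {φ : E3 → ℂ}
    (hφ : InH1 φ) (hG : Gfun p q φ < 0) : ∃ l ∈ Ioc (0 : ℝ) 1, Gfun p q (dilate l φ) = 0 := by
  have hCp : 0 < 3 * (p - 1) / (2 * (p + 1)) := div_pos (by linarith) (by linarith)
  have hCq : 0 < 3 * (q - 1) / (2 * (q + 1)) := div_pos (by linarith) (by linarith)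
  rw [Gfun] at hG
  have hb : 0 < lpPow φ (p + 1) := by
    by_contra! hb
    linarith [gradNormSq_nonneg φ, mul_nonneg hCq.le (lpPow_nonneg φ (q + 1)),
      mul_nonpos_of_nonneg_of_nonpos hCp.le hb]
  have hc : 0 < lpPow φ (q + 1) :=
    lpPow_pos_of_le_of_lpPow_pos hφ.2.1 (by linarith) (by linarith) hb
  obtain ⟨l, hl, hroot⟩ := exists_mem_Ioc_sq_mul_sub_rpow_mul_add_rpow_mul_eq_zero
    (gradNormSq_nonneg φ) (mul_pos hCq hc) (by linarith : 3 * (q - 1) / 2 < 3 * (p - 1) / 2)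
    hG.le
  exact ⟨l, hl, (Gfun_dilate hφ.1 hl.1).trans hroot⟩

lemma exists_Sfun_le_Ifun {p q ω : ℝ} (hp : 7 / 3 < p) (hq : 1 < q) (hqp : q < p)
    {φ : E3 → ℂ} (hφ : InH1 φ) (hφ0 : φ ≠ 0) (hG : Gfun p q φ ≤ 0) :
    ∃ ψ : E3 → ℂ, InH1 ψ ∧ ψ ≠ 0 ∧ Gfun p q ψ = 0 ∧ Sfun p q ω ψ ≤ Ifun p q ω φ := by
  rcases hG.lt_or_eq with hG | hG
  · obtain ⟨l, hl, hGl⟩ := exists_dilate_Gfun_eq_zero hq hqp hφ hG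
    refine ⟨dilate l φ, hφ.dilate hl.1, dilate_ne_zero hφ0 hl.1, hGl, ?_⟩
    calc Sfun p q ω (dilate l φ) = Jfun p q ω (dilate l φ) := by
          rw [Sfun_eq_Jfun_add_Gfun (by linarith) (by linarith), hGl, mul_zero, add_zero]
      _ ≤ Jfun p q ω φ := Jfun_dilate_le hp.le hq.le hqp.le hφ.1 hl
      _ ≤ Ifun p q ω φ := Jfun_le_Ifun hq hqp.le hG.le
  · exact ⟨φ, hφ, hφ0, hG, (Ifun_eq_Sfun_of_Gfun_eq_zero hG).ge⟩

theorem ground_state_energy_eq_relaxed_general (p q ω : ℝ)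
    (hp1 : 7 / 3 < p) (hq : 1 < q) (hqp : q < p) :
    sInf {m : ℝ | ∃ φ : E3 → ℂ, InH1 φ ∧ φ ≠ 0 ∧ Gfun p q φ = 0 ∧ m = Sfun p q ω φ}
      = sInf {m : ℝ | ∃ φ : E3 → ℂ, InH1 φ ∧ φ ≠ 0 ∧ Gfun p q φ ≤ 0 ∧ m = Ifun p q ω φ} := by
  apply csInf_eq_csInf_of_forall_exists_le
  · rintro _ ⟨φ, hφ, hφ0, hG, rfl⟩
    exact ⟨_, ⟨φ, hφ, hφ0, hG.le, rfl⟩, (Ifun_eq_Sfun_of_Gfun_eq_zero hG).le⟩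
  · rintro _ ⟨φ, hφ, hφ0, hG, rfl⟩
    obtain ⟨ψ, hψ, hψ0, hGψ, hle⟩ := exists_Sfun_le_Ifun (ω := ω) hp1 hq hqp hφ hφ0 hG
    exact ⟨_, ⟨ψ, hψ, hψ0, hGψ, rfl⟩, hle⟩

/-- For `7/3 < p < 5`, `1 < q < p`, `ω > 0`, the ground state energy
`m_ω = inf{S_ω(φ) : φ ∈ H¹\{0}, G(φ) = 0}` coincides with the relaxed infimum
`m̃_ω = inf{I_ω(φ) : φ ∈ H¹\{0}, G(φ) ≤ 0}`. -/
theorem ground_state_energy_eq_relaxed (p q ω : ℝ)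
    (hp1 : 7 / 3 < p) (hp2 : p < 5) (hq : 1 < q) (hqp : q < p) (hω : 0 < ω) :
    sInf {m : ℝ | ∃ φ : E3 → ℂ, InH1 φ ∧ φ ≠ 0 ∧ Gfun p q φ = 0 ∧ m = Sfun p q ω φ}
      = sInf {m : ℝ | ∃ φ : E3 → ℂ, InH1 φ ∧ φ ≠ 0 ∧ Gfun p q φ ≤ 0 ∧ m = Ifun p q ω φ} :=
  ground_state_energy_eq_relaxed_general p q ω hp1 hq hqp

end
end

section
/- Let T* > 0, C > 0, p ∈ (7/3, 5), and let g : (0, T*) → [0, ∞) be a C¹ nonincreasing function with g(t) → 0 as t → T*, satisfying g(t) ≤ C(T*−t)^{2(5−p)/(p+3)} − (T*−t)g'(t) for all 0 < t < T*. Then there exists C' > 0 such that g(t) ≤ C'(T*−t)^{2(5−p)/(p+3)} for all t sufficiently close to T*. -/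
open Real Set Filter

/-- ODE comparison lemma from the blow-up rate proof: let `T* > 0`, `C > 0`,
`p ∈ (7/3, 5)`, and let `g : (0,T*) → [0,∞)` be `C¹`, nonincreasing, with `g(t) → 0` as
`t → T*⁻`, satisfying `g(t) ≤ C(T*−t)^{2(5−p)/(p+3)} − (T*−t)g'(t)` on `(0,T*)`. Then
there is `C' > 0` with `g(t) ≤ C'(T*−t)^{2(5−p)/(p+3)}` for all `t` close enough to `T*`. -/
theorem blowup_rate_ode_comparison (Tstar C p : ℝ)
    (hT : 0 < Tstar) (hC : 0 < C) (hp1 : 7 / 3 < p) (hp2 : p < 5)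
    (g g' : ℝ → ℝ)
    (hnn : ∀ t ∈ Ioo 0 Tstar, 0 ≤ g t)
    (hder : ∀ t ∈ Ioo 0 Tstar, HasDerivAt g (g' t) t)
    (hdercont : ContinuousOn g' (Ioo 0 Tstar))
    (hmono : ∀ t ∈ Ioo 0 Tstar, g' t ≤ 0)
    (hlim : Tendsto g (nhdsWithin Tstar (Iio Tstar)) (nhds 0))
    (hineq : ∀ t ∈ Ioo 0 Tstar,
      g t ≤ C * (Tstar - t) ^ (2 * (5 - p) / (p + 3)) - (Tstar - t) * g' t) :
    ∃ C' : ℝ, 0 < C' ∧ ∃ t₁ ∈ Ioo 0 Tstar, ∀ t ∈ Ioo t₁ Tstar,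
      g t ≤ C' * (Tstar - t) ^ (2 * (5 - p) / (p + 3)) := by
  set α : ℝ := 2 * (5 - p) / (p + 3) with hαdef
  have hp3 : (0:ℝ) < p + 3 := by linarith
  have hα0 : 0 < α := div_pos (by linarith) hp3
  have hα1 : α < 1 := by
    rw [hαdef, div_lt_one hp3]; linarith
  set K : ℝ := C / (1 - α) with hKdef
  have hK : 0 < K := div_pos hC (by linarith)
  have hKC : K * (1 - α) = C := div_mul_cancel₀ _ (by linarith)
  set t₀ : ℝ := Tstar / 2 with ht₀def
  have ht₀ : t₀ ∈ Ioo 0 Tstar := ⟨by positivity, by linarith⟩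
  set φ : ℝ → ℝ := fun t => g t / (Tstar - t) - K * (Tstar - t) ^ (α - 1) with hφdef
  -- derivative of φ
  have hφder : ∀ t ∈ Ioo 0 Tstar, HasDerivAt φ
      ((g' t * (Tstar - t) - g t * (-1)) / (Tstar - t) ^ 2
        - K * ((-1) * (α - 1) * (Tstar - t) ^ (α - 1 - 1))) t := by
    intro t ht
    have hpos : 0 < Tstar - t := by linarith [ht.2]
    have h1 : HasDerivAt (fun t : ℝ => Tstar - t) (-1) t := by
      simpa using (hasDerivAt_id t).const_sub Tstar
    have h2 : HasDerivAt (fun t => g t / (Tstar - t))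
        ((g' t * (Tstar - t) - g t * (-1)) / (Tstar - t) ^ 2) t :=
      (hder t ht).div h1 hpos.ne'
    have h3 : HasDerivAt (fun t : ℝ => (Tstar - t) ^ (α - 1))
        ((-1) * (α - 1) * (Tstar - t) ^ (α - 1 - 1)) t :=
      h1.rpow_const (Or.inl hpos.ne')
    exact h2.sub (h3.const_mul K)
  -- the derivative is nonpositive
  have hDnonpos : ∀ t ∈ Ioo 0 Tstar,
      (g' t * (Tstar - t) - g t * (-1)) / (Tstar - t) ^ 2
        - K * ((-1) * (α - 1) * (Tstar - t) ^ (α - 1 - 1)) ≤ 0 := by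
    intro t ht
    have hpos : 0 < Tstar - t := by linarith [ht.2]
    have hsq : (0:ℝ) < (Tstar - t) ^ 2 := by positivity
    have hnum : g t + (Tstar - t) * g' t ≤ C * (Tstar - t) ^ α := by
      have := hineq t ht; linarith
    have hpow : C * (Tstar - t) ^ (α - 1 - 1) * (Tstar - t) ^ 2 = C * (Tstar - t) ^ α := by
      rw [show ((Tstar - t) ^ 2 : ℝ) = (Tstar - t) ^ (2:ℝ) by
            rw [← Real.rpow_natCast (Tstar - t) 2]; norm_num,
          mul_assoc, ← Real.rpow_add hpos]
      ring_nf
    have hdiv : (g' t * (Tstar - t) - g t * (-1)) / (Tstar - t) ^ 2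
        ≤ C * (Tstar - t) ^ (α - 1 - 1) := by
      rw [div_le_iff₀ hsq, ]
      calc g' t * (Tstar - t) - g t * (-1) = g t + (Tstar - t) * g' t := by ring
        _ ≤ C * (Tstar - t) ^ α := hnum
        _ = C * (Tstar - t) ^ (α - 1 - 1) * (Tstar - t) ^ 2 := hpow.symm
    have hKα : K * ((-1) * (α - 1) * (Tstar - t) ^ (α - 1 - 1))
        = C * (Tstar - t) ^ (α - 1 - 1) := by
      rw [← hKC]; ring
    rw [hKα]; linarith
  -- φ is antitone on [t₀, Tstar)
  have hsub : Ico t₀ Tstar ⊆ Ioo 0 Tstar := fun t ht => ⟨lt_of_lt_of_le ht₀.1 ht.1, ht.2⟩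
  have hanti : AntitoneOn φ (Ico t₀ Tstar) := by
    apply antitoneOn_of_deriv_nonpos (convex_Ico _ _)
    · exact fun t ht => ((hφder t (hsub ht)).continuousAt).continuousWithinAt
    · intro t ht
      rw [interior_Ico] at ht
      exact ((hφder t (hsub (Ioo_subset_Ico_self ht))).differentiableAt).differentiableWithinAt
    · intro t ht
      rw [interior_Ico] at ht
      rw [(hφder t (hsub (Ioo_subset_Ico_self ht))).deriv]
      exact hDnonpos t (hsub (Ioo_subset_Ico_self ht))
  -- assemble the bound
  set M : ℝ := g t₀ / (Tstar - t₀) with hMdef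
  have hTt₀ : 0 < Tstar - t₀ := by linarith [ht₀.2]
  have hM : 0 ≤ M := div_nonneg (hnn t₀ ht₀) hTt₀.le
  refine ⟨M * Tstar ^ (1 - α) + K, by positivity, t₀, ht₀, ?_⟩
  intro t ht
  have htIoo : t ∈ Ioo 0 Tstar := ⟨lt_trans ht₀.1 ht.1, ht.2⟩
  have hpos : 0 < Tstar - t := by linarith [ht.2]
  have hφle : φ t ≤ φ t₀ := hanti ⟨le_refl t₀, ht₀.2⟩ ⟨ht.1.le, ht.2⟩ ht.1.le
  have hdrop : φ t₀ ≤ M := by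
    have : 0 ≤ K * (Tstar - t₀) ^ (α - 1) := by positivity
    simp only [hφdef]; linarith
  have hht : g t / (Tstar - t) ≤ M + K * (Tstar - t) ^ (α - 1) := by
    have : g t / (Tstar - t) - K * (Tstar - t) ^ (α - 1) ≤ M := le_trans hφle hdrop
    linarith
  have hgt : g t ≤ (M + K * (Tstar - t) ^ (α - 1)) * (Tstar - t) := by
    rw [← div_le_iff₀ hpos] at *
    exact hht
  have hmul : (Tstar - t) ^ (α - 1) * (Tstar - t) = (Tstar - t) ^ α := by
    nth_rewrite 2 [show (Tstar - t) = (Tstar - t) ^ (1:ℝ) by rw [Real.rpow_one]]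
    rw [← Real.rpow_add hpos, sub_add_cancel]
  have hlin : (Tstar - t) ≤ Tstar ^ (1 - α) * (Tstar - t) ^ α := by
    have h2 : (Tstar - t) ^ (1 - α) ≤ Tstar ^ (1 - α) :=
      Real.rpow_le_rpow hpos.le (by linarith [htIoo.1]) (by linarith)
    calc (Tstar - t) = (Tstar - t) ^ (1 - α) * (Tstar - t) ^ α := by
          rw [← Real.rpow_add hpos, sub_add_cancel, Real.rpow_one]
      _ ≤ Tstar ^ (1 - α) * (Tstar - t) ^ α :=
          mul_le_mul_of_nonneg_right h2 (Real.rpow_nonneg hpos.le _)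
  calc g t ≤ (M + K * (Tstar - t) ^ (α - 1)) * (Tstar - t) := hgt
    _ = M * (Tstar - t) + K * ((Tstar - t) ^ (α - 1) * (Tstar - t)) := by ring
    _ = M * (Tstar - t) + K * (Tstar - t) ^ α := by rw [hmul]
    _ ≤ M * (Tstar ^ (1 - α) * (Tstar - t) ^ α) + K * (Tstar - t) ^ α := by
        have := mul_le_mul_of_nonneg_left hlin hM; linarith
    _ = (M * Tstar ^ (1 - α) + K) * (Tstar - t) ^ α := by ring
end
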